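/- Let ω = e^{2πi/11}, let ψ : ℂ⁶ → ℂ⁶ be the diagonal linear map with eigenvalues (1, ω, ω³, ω⁴, ω⁵, ω⁹) on the standard basis e₀, ..., e₅, and let h = x₀³ + x₁²x₅ + x₂²x₄ + x₃²x₂ + x₄²x₁ + x₅²x₃. Then a 2-dimensional ℂ-linear subspace W ⊆ ℂ⁶ satisfies ψ(W) = W and h(v) = 0 for all v ∈ W if and only if W is one of the five subspaces span(e₁,e₂), span(e₁,e₃), span(e₂,e₅), span(e₃,e₄), span(e₄,e₅). In other words, the lines on the Klein cubic fourfold X_Kl = V(h) fixed by the induced automorphism of the Fano scheme of lines are exactly these five coordinate lines. -/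
import Mathlib


open MvPolynomial

/-!
The lines on the Klein cubic fourfold `X_Kl = V(h)` that are fixed by the
order 11 automorphism induced by the diagonal map `ψ` with eigenvalues
`(1, ω, ω³, ω⁴, ω⁵, ω⁹)` are exactly the five coordinate lines
`[e₁e₂], [e₁e₃], [e₂e₅], [e₃e₄], [e₄e₅]`.
-/

/-- `ω = e^{2πi/11}`, a primitive 11-th root of unity. -/
noncomputable def ω : ℂ := Complex.exp (2 * Real.pi * Complex.I / 11)

/-- The diagonal linear map `ψ : ℂ⁶ → ℂ⁶` with eigenvalues
`(1, ω, ω³, ω⁴, ω⁵, ω⁹)`. -/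
noncomputable def ψ : (Fin 6 → ℂ) →ₗ[ℂ] (Fin 6 → ℂ) :=
  LinearMap.pi fun i => ![1, ω, ω ^ 3, ω ^ 4, ω ^ 5, ω ^ 9] i • LinearMap.proj i

/-- The defining polynomial `h` of the Klein cubic fourfold `X_Kl ⊂ ℙ⁵`. -/
noncomputable def klein : MvPolynomial (Fin 6) ℂ :=
  X 0 ^ 3 + X 1 ^ 2 * X 5 + X 2 ^ 2 * X 4 + X 3 ^ 2 * X 2 +
    X 4 ^ 2 * X 1 + X 5 ^ 2 * X 3

/-- The `i`-th standard basis vector of `ℂ⁶`. -/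
noncomputable def e (i : Fin 6) : Fin 6 → ℂ := Pi.single i 1

noncomputable def lam : Fin 6 → ℂ := ![1, ω, ω ^ 3, ω ^ 4, ω ^ 5, ω ^ 9]

lemma hprim : IsPrimitiveRoot ω 11 := Complex.isPrimitiveRoot_exp 11 (by norm_num)

lemma lam_eq (i : Fin 6) : lam i = ω ^ (![0,1,3,4,5,9] : Fin 6 → ℕ) i := by
  fin_cases i <;> norm_num [lam, Matrix.cons_val_succ, Matrix.cons_val_zero]

lemma lam_injective : Function.Injective lam := by
  intro i j hij
  rw [lam_eq, lam_eq] at hij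
  have h := hprim.pow_inj (i := (![0,1,3,4,5,9] : Fin 6 → ℕ) i)
    (j := (![0,1,3,4,5,9] : Fin 6 → ℕ) j) (by fin_cases i <;> norm_num)
    (by fin_cases j <;> norm_num) hij
  have hminj : Function.Injective (![0,1,3,4,5,9] : Fin 6 → ℕ) := by decide
  exact hminj h

lemma lam_ne_zero (i : Fin 6) : lam i ≠ 0 := by
  rw [lam_eq]; exact pow_ne_zero _ (Complex.exp_ne_zero _)

lemma psi_apply (v : Fin 6 → ℂ) (k : Fin 6) : ψ v k = lam k * v k := rfl

lemma psi_e (i : Fin 6) : ψ (e i) = lam i • e i := by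
  funext k
  by_cases hk : k = i <;> simp [psi_apply, e, Pi.single_apply, hk]

lemma evalK (v : Fin 6 → ℂ) : eval v klein =
    v 0 ^ 3 + v 1 ^ 2 * v 5 + v 2 ^ 2 * v 4 + v 3 ^ 2 * v 2 +
      v 4 ^ 2 * v 1 + v 5 ^ 2 * v 3 := by
  simp [klein]

lemma sp_comm (a b : Fin 6 → ℂ) :
    Submodule.span ℂ {a, b} = Submodule.span ℂ {b, a} := by rw [Set.pair_comm]

lemma psi_prod_mem (W : Submodule ℂ (Fin 6 → ℂ)) (hinv : ∀ v ∈ W, ψ v ∈ W)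
    (v : Fin 6 → ℂ) (hv : v ∈ W) (s : Finset (Fin 6)) :
    (fun k => (∏ j ∈ s, (lam k - lam j)) * v k) ∈ W := by
  induction s using Finset.induction with
  | empty => simpa using hv
  | @insert a s ha ih =>
      have h1 : (fun k => (∏ j ∈ insert a s, (lam k - lam j)) * v k)
          = ψ (fun k => (∏ j ∈ s, (lam k - lam j)) * v k)
            - lam a • (fun k => (∏ j ∈ s, (lam k - lam j)) * v k) := by
        funext k
        simp only [Pi.sub_apply, Pi.smul_apply, psi_apply, Finset.prod_insert ha,
          smul_eq_mul]
        ring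
      rw [h1]
      exact W.sub_mem (hinv _ ih) (W.smul_mem _ ih)

lemma coord_mem (W : Submodule ℂ (Fin 6 → ℂ)) (hinv : ∀ v ∈ W, ψ v ∈ W)
    (v : Fin 6 → ℂ) (hv : v ∈ W) (i : Fin 6) : v i • e i ∈ W := by
  set c : ℂ := ∏ j ∈ Finset.univ.erase i, (lam i - lam j) with hc_def
  have hc : c ≠ 0 := Finset.prod_ne_zero_iff.2 fun j hj =>
    sub_ne_zero.2 fun h => (Finset.mem_erase.1 hj).1 (lam_injective h).symm
  have hw := psi_prod_mem W hinv v hv (Finset.univ.erase i)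
  have heq : (fun k => (∏ j ∈ Finset.univ.erase i, (lam k - lam j)) * v k)
      = (c * v i) • e i := by
    funext k
    by_cases hk : k = i
    · subst hk; simp [e, Pi.single_apply, hc_def]
    · have hz : (∏ j ∈ Finset.univ.erase i, (lam k - lam j)) = 0 :=
        Finset.prod_eq_zero (Finset.mem_erase.2 ⟨hk, Finset.mem_univ k⟩) (sub_self _)
      simp [e, Pi.single_apply, hk, hz]
  rw [heq] at hw
  have h2 := W.smul_mem c⁻¹ hw
  rwa [smul_smul, ← mul_assoc, inv_mul_cancel₀ hc, one_mul] at h2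

lemma finrank_span_pair {i j : Fin 6} (hij : i ≠ j) :
    Module.finrank ℂ (Submodule.span ℂ ({e i, e j} : Set (Fin 6 → ℂ))) = 2 := by
  have hli : LinearIndependent ℂ ![e i, e j] := by
    have hb := (Pi.basisFun ℂ (Fin 6)).linearIndependent
    have h2 : ![e i, e j] = (Pi.basisFun ℂ (Fin 6)) ∘ ![i, j] := by
      funext a; fin_cases a <;> simp [e]
    rw [h2]
    exact hb.comp ![i, j] (by
      intro a b hab
      fin_cases a <;> fin_cases b <;> simp_all)
  have h := finrank_span_eq_card hli
  have hr : Set.range ![e i, e j] = {e i, e j} := by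
    rw [Set.pair_comm]; simp [Matrix.range_cons, Matrix.range_empty]
  rw [hr] at h
  simpa using h

lemma map_span_pair (i j : Fin 6) :
    (Submodule.span ℂ ({e i, e j} : Set (Fin 6 → ℂ))).map ψ
      = Submodule.span ℂ ({e i, e j} : Set (Fin 6 → ℂ)) := by
  rw [Submodule.map_span, Set.image_insert_eq, Set.image_singleton, psi_e, psi_e]
  apply le_antisymm
  · refine Submodule.span_le.2 (Set.insert_subset_iff.2 ⟨?_, Set.singleton_subset_iff.2 ?_⟩)
    · exact Submodule.smul_mem _ _ (Submodule.subset_span (Set.mem_insert _ _))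
    · exact Submodule.smul_mem _ _ (Submodule.subset_span (Set.mem_insert_of_mem _ rfl))
  · refine Submodule.span_le.2 (Set.insert_subset_iff.2 ⟨?_, Set.singleton_subset_iff.2 ?_⟩)
    · have hm := Submodule.smul_mem _ (lam i)⁻¹
        (Submodule.subset_span (R := ℂ) (Set.mem_insert (lam i • e i) {lam j • e j}))
      rwa [smul_smul, inv_mul_cancel₀ (lam_ne_zero i), one_smul] at hm
    · have hm := Submodule.smul_mem _ (lam j)⁻¹
        (Submodule.subset_span (R := ℂ)
          (Set.mem_insert_of_mem (lam i • e i) (Set.mem_singleton (lam j • e j))))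
      rwa [smul_smul, inv_mul_cancel₀ (lam_ne_zero j), one_smul] at hm


set_option maxHeartbeats 4000000 in
/-- A 2-dimensional subspace `W ⊆ ℂ⁶` (i.e. a line in `ℙ⁵`) satisfies
`ψ(W) = W` and `h|_W = 0` (i.e. it is a `ψ`-fixed line on `X_Kl`) if and only
if it is one of the five coordinate subspaces `⟨e₁,e₂⟩, ⟨e₁,e₃⟩, ⟨e₂,e₅⟩,
⟨e₃,e₄⟩, ⟨e₄,e₅⟩`. -/
theorem klein_fixed_lines (W : Submodule ℂ (Fin 6 → ℂ))
    (hW : Module.finrank ℂ W = 2) :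
    (W.map ψ = W ∧ ∀ v ∈ W, eval v klein = 0) ↔
      (W = Submodule.span ℂ {e 1, e 2} ∨
       W = Submodule.span ℂ {e 1, e 3} ∨
       W = Submodule.span ℂ {e 2, e 5} ∨
       W = Submodule.span ℂ {e 3, e 4} ∨
       W = Submodule.span ℂ {e 4, e 5}) := by
  constructor
  · rintro ⟨hmap, hvan⟩
    have hinv : ∀ v ∈ W, ψ v ∈ W := fun v hv => hmap ▸ Submodule.mem_map_of_mem hv
    have hbot : W ≠ ⊥ := by
      intro h; rw [h] at hW; simp at hW
    obtain ⟨v, hv, hv0⟩ := (Submodule.ne_bot_iff W).1 hbot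
    obtain ⟨i, hi⟩ : ∃ i, v i ≠ 0 := by
      by_contra h; push_neg at h; exact hv0 (funext h)
    have hei : e i ∈ W := by
      have h1 := coord_mem W hinv v hv i
      have h2 := W.smul_mem (v i)⁻¹ h1
      rwa [smul_smul, inv_mul_cancel₀ hi, one_smul] at h2
    have hW2 : ¬ W ≤ Submodule.span ℂ {e i} := by
      intro hle
      have hone : e i ≠ 0 := by
        intro h; have := congrFun h i; simp [e] at this
      have h1 := Submodule.finrank_mono hle
      rw [hW, finrank_span_singleton hone] at h1
      omega
    obtain ⟨w, hw, hwni⟩ := SetLike.not_le_iff_exists.1 hW2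
    obtain ⟨j, hj, hji⟩ : ∃ j, w j ≠ 0 ∧ j ≠ i := by
      by_contra h; push_neg at h
      apply hwni
      have hwe : w = w i • e i := by
        funext k
        by_cases hk : k = i
        · subst hk; simp [e, Pi.single_apply]
        · have hk0 : w k = 0 := by
            by_contra h2; exact hk (h k h2)
          simp [e, Pi.single_apply, hk, hk0]
      rw [hwe]
      exact Submodule.smul_mem _ _ (Submodule.mem_span_singleton_self _)
    have hej : e j ∈ W := by
      have h1 := coord_mem W hinv w hw j
      have h2 := W.smul_mem (w j)⁻¹ h1
      rwa [smul_smul, inv_mul_cancel₀ hj, one_smul] at h2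
    have hle : Submodule.span ℂ ({e i, e j} : Set (Fin 6 → ℂ)) ≤ W :=
      Submodule.span_le.2 (Set.insert_subset_iff.2 ⟨hei, Set.singleton_subset_iff.2 hej⟩)
    have hWs : W = Submodule.span ℂ ({e i, e j} : Set (Fin 6 → ℂ)) :=
      (Submodule.eq_of_le_of_finrank_le hle
        (by rw [hW, finrank_span_pair (Ne.symm hji)])).symm
    have h1 : eval (e i) klein = 0 := hvan _ hei
    have h1' : eval (e j) klein = 0 := hvan _ hej
    have h2 : eval (e i + e j) klein = 0 := hvan _ (W.add_mem hei hej)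
    clear hvan hinv hmap hle hei hej hbot hv0 hwni hW2 hi hj hv hw hW
    fin_cases i <;> fin_cases j <;>
      first
      | exact absurd rfl hji
      | (exfalso; simp (config := { decide := true }) [evalK, e, Pi.single_apply] at h1 h1' h2; done)
      | exact Or.inl hWs
      | exact Or.inl (hWs.trans (sp_comm _ _))
      | exact Or.inr (Or.inl hWs)
      | exact Or.inr (Or.inl (hWs.trans (sp_comm _ _)))
      | exact Or.inr (Or.inr (Or.inl hWs))
      | exact Or.inr (Or.inr (Or.inl (hWs.trans (sp_comm _ _))))
      | exact Or.inr (Or.inr (Or.inr (Or.inl hWs)))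
      | exact Or.inr (Or.inr (Or.inr (Or.inl (hWs.trans (sp_comm _ _)))))
      | exact Or.inr (Or.inr (Or.inr (Or.inr hWs)))
      | exact Or.inr (Or.inr (Or.inr (Or.inr (hWs.trans (sp_comm _ _)))))
  · rintro (rfl | rfl | rfl | rfl | rfl) <;>
      refine ⟨map_span_pair _ _, fun v hv => ?_⟩ <;>
      obtain ⟨a, b, rfl⟩ := Submodule.mem_span_pair.1 hv <;>
      simp [evalK, e, Pi.single_apply]
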